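/- If every connective occurring in the formulae of a default theory ⟨W,D⟩ is monotone, then ⟨W,D⟩ has at most one stable extension. -/

import Mathlib

inductive Form : Type where
  | var : ℕ → Form
  | app : (n : ℕ) → ((Fin n → Bool) → Bool) → (Fin n → Form) → Form

namespace Form

def eval (σ : ℕ → Bool) : Form → Bool
  | var x => σ x
  | app _ f a => f (fun i => (a i).eval σ)

def tru : Form := app 0 (fun _ => true) (fun i => i.elim0)
def fls : Form := app 0 (fun _ => false) (fun i => i.elim0)
def neg (φ : Form) : Form := app 1 (fun v => !(v 0)) (fun _ => φ)
def conj (φ ψ : Form) : Form := app 2 (fun v => v 0 && v 1) ![φ, ψ]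
def disj (φ ψ : Form) : Form := app 2 (fun v => v 0 || v 1) ![φ, ψ]

end Form

/-- σ satisfies all formulae of A. -/
def Sat (σ : ℕ → Bool) (A : Set Form) : Prop := ∀ φ ∈ A, φ.eval σ = true

/-- Semantic consequence A ⊨ φ. -/
def Entails (A : Set Form) (φ : Form) : Prop := ∀ σ, Sat σ A → φ.eval σ = true

/-- Th(A) = {φ | A ⊨ φ}. -/
def Th (A : Set Form) : Set Form := {φ | Entails A φ}

def Consistent (A : Set Form) : Prop := ∃ σ, Sat σ A

/-- A default rule (α : β / γ). -/
structure Default where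
  pre : Form
  just : Form
  con : Form

/-- S contains W, is deductively closed, and closed under defaults applicable w.r.t. E. -/
def GammaClosed (W : Set Form) (D : Set Default) (E S : Set Form) : Prop :=
  W ⊆ S ∧ Th S = S ∧ ∀ d ∈ D, d.pre ∈ S → Form.neg d.just ∉ E → d.con ∈ S

/-- Γ(E): the smallest set satisfying the three closure conditions. -/
def Gamma (W : Set Form) (D : Set Default) (E : Set Form) : Set Form :=
  ⋂₀ {S | GammaClosed W D E S}

/-- E is a stable extension of ⟨W,D⟩. -/
def Stable (W : Set Form) (D : Set Default) (E : Set Form) : Prop :=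
  Gamma W D E = E

inductive UsesOnly (P : ∀ n, ((Fin n → Bool) → Bool) → Prop) : Form → Prop
  | var (x : ℕ) : UsesOnly P (Form.var x)
  | app {n : ℕ} {f : (Fin n → Bool) → Bool} {a : Fin n → Form} :
      P n f → (∀ i, UsesOnly P (a i)) → UsesOnly P (Form.app n f a)

/-- f is monotone. -/
def MonoFun : ∀ n : ℕ, ((Fin n → Bool) → Bool) → Prop :=
  fun _ f => ∀ a b, (∀ i, a i ≤ b i) → f a ≤ f b
/-! A monotone formula true under some assignment is true under the all-true assignment `⊤`;
otherwise it is unsatisfiable. Hence, if `W` is consistent, every stable extension is consistent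
and satisfied by `⊤`, so a justification `β` is refuted by a stable extension exactly when
`β.eval ⊤ = false`, a condition independent of the extension. Since `Γ(E)` depends on `E` only
through which justifications `E` refutes, all stable extensions coincide. If `W` is
inconsistent, every stable extension is the set of all formulae. -/

@[simp]
lemma Form.eval_neg (σ : ℕ → Bool) (φ : Form) : (Form.neg φ).eval σ = !φ.eval σ := rfl

namespace UsesOnly

variable {φ : Form}

lemma monotone_eval (h : UsesOnly MonoFun φ) : Monotone fun σ => φ.eval σ := by
  intro σ τ hστ
  induction h with
  | var x => exact hστ x
  | app hf _ ih => exact hf _ _ ih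

lemma eval_top_of_eval (h : UsesOnly MonoFun φ) {σ : ℕ → Bool} (hσ : φ.eval σ = true) :
    φ.eval ⊤ = true :=
  top_le_iff.mp (show true ≤ φ.eval ⊤ from hσ ▸ h.monotone_eval (le_top : σ ≤ ⊤))

lemma eval_eq_false_of_eval_top (h : UsesOnly MonoFun φ) (htop : φ.eval ⊤ = false)
    (σ : ℕ → Bool) : φ.eval σ = false :=
  Bool.eq_false_of_le_false (htop ▸ h.monotone_eval (le_top : σ ≤ ⊤))

end UsesOnly

lemma subset_th (A : Set Form) : A ⊆ Th A := fun φ hφ _ hσ => hσ φ hφ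

lemma th_mono {A B : Set Form} (h : A ⊆ B) : Th A ⊆ Th B :=
  fun _ hφ σ hσ => hφ σ fun ψ hψ => hσ ψ (h hψ)

lemma th_eq_self_of_subset {A : Set Form} (h : Th A ⊆ A) : Th A = A :=
  h.antisymm (subset_th A)

lemma th_th (A : Set Form) : Th (Th A) = Th A :=
  th_eq_self_of_subset fun _ hφ σ hσ => hφ σ fun _ hψ => hψ σ hσ

lemma th_sInter {𝒮 : Set (Set Form)} (h𝒮 : ∀ S ∈ 𝒮, Th S = S) : Th (⋂₀ 𝒮) = ⋂₀ 𝒮 :=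
  th_eq_self_of_subset fun _ hφ S hS => h𝒮 S hS ▸ th_mono (Set.sInter_subset_of_mem hS) hφ

lemma th_setOf_eval (σ : ℕ → Bool) : Th {φ | φ.eval σ = true} = {φ | φ.eval σ = true} :=
  th_eq_self_of_subset fun _ hφ => hφ σ fun _ hψ => hψ

lemma consistent_iff_th_ne_univ {A : Set Form} : Consistent A ↔ Th A ≠ Set.univ := by
  constructor
  · rintro ⟨σ, hσ⟩ hA
    simpa [Form.fls, Form.eval] using (hA ▸ Set.mem_univ Form.fls : Form.fls ∈ Th A) σ hσ
  · intro hA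
    obtain ⟨φ, hφ⟩ := (Set.ne_univ_iff_exists_notMem _).mp hA
    by_contra hc
    exact hφ fun σ hσ => (hc ⟨σ, hσ⟩).elim

section Gamma

variable {W : Set Form} {D : Set Default} {E S : Set Form}

lemma gamma_subset (hS : GammaClosed W D E S) : Gamma W D E ⊆ S :=
  Set.sInter_subset_of_mem hS

lemma gammaClosed_gamma : GammaClosed W D E (Gamma W D E) :=
  ⟨fun _ hφ _ hS => hS.1 hφ, th_sInter fun _ hS => hS.2.1,
    fun d hd hpre hjust _ hS => hS.2.2 d hd (hpre _ hS) hjust⟩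

lemma gamma_congr {E' : Set Form} (h : ∀ d ∈ D, Form.neg d.just ∈ E ↔ Form.neg d.just ∈ E') :
    Gamma W D E = Gamma W D E' := by
  have hclosed : ∀ S, GammaClosed W D E S ↔ GammaClosed W D E' S := fun S =>
    and_congr_right' <| and_congr_right' <| forall₂_congr fun d hd => by rw [h d hd]
  simp only [Gamma, hclosed]

lemma gamma_univ_subset_th : Gamma W D Set.univ ⊆ Th W :=
  gamma_subset ⟨subset_th W, th_th W, fun _ _ _ hjust => (hjust (Set.mem_univ _)).elim⟩

end Gamma

namespace Stable

variable {W : Set Form} {D : Set Default} {E : Set Form}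

lemma gammaClosed (h : Stable W D E) : GammaClosed W D E E := by
  have hΓ := gammaClosed_gamma (W := W) (D := D) (E := E)
  rwa [h] at hΓ

lemma eq_univ_of_not_consistent (h : Stable W D E) (hW : ¬Consistent W) : E = Set.univ := by
  rw [consistent_iff_th_ne_univ, not_not] at hW
  rw [← h.gammaClosed.2.1, Set.eq_univ_iff_forall]
  exact fun φ => th_mono h.gammaClosed.1 (hW ▸ Set.mem_univ φ)

lemma consistent (h : Stable W D E) (hW : Consistent W) : Consistent E := by
  rw [consistent_iff_th_ne_univ, h.gammaClosed.2.1]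
  rintro rfl
  exact consistent_iff_th_ne_univ.mp hW <|
    Set.eq_univ_of_univ_subset (h ▸ gamma_univ_subset_th)

/-- `E ∩ {φ | φ.eval ⊤}` is `Γ(E)`-closed: a consequent fired into `E` is satisfiable, since `E`
is, hence true at `⊤`. -/
lemma sat_top (h : Stable W D E) (hE : Consistent E) (hW : ∀ φ ∈ W, UsesOnly MonoFun φ)
    (hcon : ∀ d ∈ D, UsesOnly MonoFun d.con) : Sat ⊤ E := by
  obtain ⟨σ, hσ⟩ := hE
  obtain ⟨hWE, hthE, hdefE⟩ := h.gammaClosed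
  have hclosed : GammaClosed W D E (E ∩ {φ | φ.eval ⊤ = true}) := by
    refine ⟨fun φ hφ => ⟨hWE hφ, (hW φ hφ).eval_top_of_eval (hσ φ (hWE hφ))⟩, ?_, ?_⟩
    · rw [← Set.sInter_pair]
      exact th_sInter (by simpa using ⟨hthE, th_setOf_eval ⊤⟩)
    · intro d hd hpre hjust
      have hd_con := hdefE d hd hpre.1 hjust
      exact ⟨hd_con, (hcon d hd).eval_top_of_eval (hσ _ hd_con)⟩
  exact fun φ hφ => (gamma_subset hclosed (Eq.ge h hφ)).2

lemma neg_mem_iff (h : Stable W D E) (hWc : Consistent W) (hW : ∀ φ ∈ W, UsesOnly MonoFun φ)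
    (hcon : ∀ d ∈ D, UsesOnly MonoFun d.con) {β : Form} (hβ : UsesOnly MonoFun β) :
    Form.neg β ∈ E ↔ β.eval ⊤ = false := by
  constructor
  · intro hneg
    simpa using h.sat_top (h.consistent hWc) hW hcon _ hneg
  · intro hβtop
    rw [← h.gammaClosed.2.1]
    intro σ _
    simp [hβ.eval_eq_false_of_eval_top hβtop σ]

end Stable

theorem stmt8_general (W : Set Form) (D : Set Default)
    (hW : ∀ φ ∈ W, UsesOnly MonoFun φ)
    (hDc : ∀ d ∈ D, UsesOnly MonoFun d.pre ∧ UsesOnly MonoFun d.just ∧ UsesOnly MonoFun d.con) :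
    ∀ E₁ E₂ : Set Form, Stable W D E₁ → Stable W D E₂ → E₁ = E₂ := by
  intro E₁ E₂ h₁ h₂
  by_cases hWc : Consistent W
  · have hcon d hd := (hDc d hd).2.2
    rw [← h₁, ← h₂]
    refine gamma_congr fun d hd => ?_
    rw [h₁.neg_mem_iff hWc hW hcon (hDc d hd).2.1, h₂.neg_mem_iff hWc hW hcon (hDc d hd).2.1]
  · rw [h₁.eq_univ_of_not_consistent hWc, h₂.eq_univ_of_not_consistent hWc]

/-- If every connective occurring in ⟨W,D⟩ is monotone, then ⟨W,D⟩ has at most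
one stable extension. -/
theorem stmt8 (W : Set Form) (D : Set Default) (hD : D.Finite)
    (hW : ∀ φ ∈ W, UsesOnly MonoFun φ)
    (hDc : ∀ d ∈ D, UsesOnly MonoFun d.pre ∧ UsesOnly MonoFun d.just ∧ UsesOnly MonoFun d.con) :
    ∀ E₁ E₂ : Set Form, Stable W D E₁ → Stable W D E₂ → E₁ = E₂ :=
  stmt8_general W D hW hDc
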